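/- arXiv:1803.00516 — 8 statements merged into one kernel-verified Lean document; each statement's English description precedes it below -/
import Mathlib

section
/- Let R be a commutative ring. If the annihilator of the nilradical is contained in the nilradical, then for every ideal I, the radical of the annihilator of the radical of I equals the nilradical; in particular r(a(r(I))) = r(a(r(a(I)))) for all ideals I. -/
theorem rar_constant_of_ann_nilradical_le (R : Type*) [CommRing R]
    (h : Submodule.annihilator (nilradical R) ≤ nilradical R) :
    (∀ I : Ideal R, (Submodule.annihilator I.radical).radical = nilradical R) ∧
    (∀ I : Ideal R,
      (Submodule.annihilator I.radical).radical =
        (Submodule.annihilator (Submodule.annihilator I : Ideal R).radical).radical) := by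
  have key : ∀ I : Ideal R, (Submodule.annihilator I.radical).radical = nilradical R := by
    intro I
    apply le_antisymm
    · have h1 : nilradical R ≤ I.radical := Ideal.radical_mono bot_le
      have h2 : Submodule.annihilator I.radical ≤ nilradical R :=
        (Submodule.annihilator_mono h1).trans h
      calc (Submodule.annihilator I.radical).radical ≤ (nilradical R).radical :=
            Ideal.radical_mono h2
        _ = nilradical R := Ideal.radical_idem _
    · exact Ideal.radical_mono bot_le
  exact ⟨key, fun I => (key I).trans (key _).symm⟩
end

section
/- Let R be a commutative ring in which r∘a∘r = r∘a∘r∘a as maps on ideals (r the radical map, a the annihilator map). Then the annihilator of the nilradical is contained in the nilradical. -/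
theorem ann_nilradical_le_of_rar_eq_rara (R : Type*) [CommRing R]
    (h : ∀ I : Ideal R,
      (Submodule.annihilator I.radical).radical =
        (Submodule.annihilator (Submodule.annihilator I : Ideal R).radical).radical) :
    Submodule.annihilator (nilradical R) ≤ nilradical R := by
  have h0 := h ⊥
  have ha : (Submodule.annihilator (⊥ : Ideal R) : Ideal R) = ⊤ := Submodule.annihilator_bot
  rw [ha] at h0
  have ht : ((⊤ : Ideal R) : Submodule R R).annihilator = ⊥ := by
    ext x
    simp only [Submodule.mem_annihilator, Submodule.mem_bot]
    constructor
    · intro hx; simpa using hx 1 trivial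
    · intro hx; subst hx; intro y _; simp
  have hrt : (⊤ : Ideal R).radical = ⊤ := Ideal.radical_top R
  rw [hrt, ht] at h0
  have hnil : (⊥ : Ideal R).radical = nilradical R := rfl
  rw [hnil] at h0
  calc Submodule.annihilator (nilradical R)
      ≤ (Submodule.annihilator ((nilradical R : Ideal R) : Submodule R R) : Ideal R).radical :=
        Ideal.le_radical
    _ = (⊥ : Ideal R).radical := h0
    _ = nilradical R := rfl
end

section
/- In a commutative ring in which the double annihilator of every ideal equals itself (a dual ring), the annihilator of an arbitrary intersection of ideals equals the sum of the annihilators: a(⋂ᵢ Iᵢ) = Σᵢ a(Iᵢ). -/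
theorem ann_iInf_eq_iSup_ann (R : Type*) [CommRing R]
    (hdual : ∀ I : Ideal R, Submodule.annihilator (Submodule.annihilator I : Ideal R) = I)
    {ι : Sort*} (I : ι → Ideal R) :
    Submodule.annihilator (⨅ i, I i) = ⨆ i, Submodule.annihilator (I i) := by
  have h1 : (⨅ i, I i) = Submodule.annihilator (⨆ i, Submodule.annihilator (I i) : Ideal R) := by
    rw [Submodule.annihilator_iSup]
    exact iInf_congr fun i => (hdual (I i)).symm
  rw [h1, hdual]
end

section
/- Let R be a commutative local ring which is not a field and in which every ideal equals its double annihilator. Then for every prime ideal P of R, the annihilator of P is contained in P. -/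
theorem ann_prime_le_self_of_local_dual (R : Type*) [CommRing R] [IsLocalRing R]
    (hnf : ¬ IsField R)
    (hdual : ∀ I : Ideal R, Submodule.annihilator (Submodule.annihilator I : Ideal R) = I)
    (P : Ideal R) (hP : P.IsPrime) :
    Submodule.annihilator P ≤ P := by
  by_contra h
  obtain ⟨a, ha, haP⟩ := SetLike.not_le_iff_exists.mp h
  -- maximal ideal is nonzero
  have hm : IsLocalRing.maximalIdeal R ≠ ⊥ := fun hb =>
    hnf (IsLocalRing.isField_iff_maximalIdeal_eq.mpr hb)
  -- annihilator of maximal ideal is nonzero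
  have hannm : Submodule.annihilator (IsLocalRing.maximalIdeal R) ≠ ⊥ := by
    intro h0
    have := hdual (IsLocalRing.maximalIdeal R)
    rw [h0, Submodule.annihilator_bot] at this
    exact (IsLocalRing.maximalIdeal.isMaximal R).ne_top this.symm
  obtain ⟨x, hx, hx0⟩ := Submodule.exists_mem_ne_zero_of_ne_bot hannm
  -- elements of P multiplied by a give 0
  have hPa : ∀ p ∈ P, p * a = 0 := by
    intro p hp
    have := Submodule.mem_annihilator.mp ha p hp
    rw [smul_eq_mul] at this
    rw [mul_comm]; exact this
  -- P = ann (span {a})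
  have hPeq : P = Submodule.annihilator (Ideal.span {a}) := by
    apply le_antisymm
    · intro p hp
      rw [Submodule.mem_annihilator]
      intro y hy
      obtain ⟨c, rfl⟩ := Ideal.mem_span_singleton'.mp hy
      rw [smul_eq_mul, mul_comm c a, ← mul_assoc, mul_comm p a]
      have := hPa p hp
      rw [mul_comm] at this
      rw [this, zero_mul]
    · intro r hr
      have hr : r * a = 0 := by
        have := Submodule.mem_annihilator.mp hr a (Ideal.mem_span_singleton_self a)
        rwa [smul_eq_mul] at this
      rcases hP.mem_or_mem (show r * a ∈ P by rw [hr]; exact P.zero_mem) with h1 | h1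
      · exact h1
      · exact absurd h1 haP
  have hannP : (Submodule.annihilator P : Ideal R) = Ideal.span {a} := by
    rw [hPeq, hdual]
  by_cases hu : IsUnit a
  · -- then P = ⊥, and x * y = 0 gives contradiction with primality of ⊥
    have hPbot : P = ⊥ := by
      apply (Submodule.eq_bot_iff P).mpr
      intro p hp
      exact (hu.mul_left_eq_zero).mp (hPa p hp)
    obtain ⟨y, hy, hy0⟩ := Submodule.exists_mem_ne_zero_of_ne_bot hm
    have hxy : x * y = 0 := by
      have := Submodule.mem_annihilator.mp hx y hy
      rwa [smul_eq_mul] at this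
    rcases hP.mem_or_mem (show x * y ∈ P by rw [hxy]; exact P.zero_mem) with h1 | h1 <;>
      rw [hPbot] at h1 <;> [exact hx0 h1; exact hy0 h1]
  · -- a ∈ maximal ideal
    have ham : a ∈ IsLocalRing.maximalIdeal R := hu
    have hxa : x * a = 0 := by
      have := Submodule.mem_annihilator.mp hx a ham
      rwa [smul_eq_mul] at this
    -- x ∈ P
    have hxP : x ∈ P := by
      rcases hP.mem_or_mem (show x * a ∈ P by rw [hxa]; exact P.zero_mem) with h1 | h1
      · exact h1
      · exact absurd h1 haP
    -- x ∈ span {a}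
    have hxspan : x ∈ Ideal.span {a} := by
      rw [← hannP]
      exact Submodule.annihilator_mono (IsLocalRing.le_maximalIdeal hP.ne_top) hx
    obtain ⟨c, hc⟩ := Ideal.mem_span_singleton'.mp hxspan
    -- c ∈ P
    have hcP : c ∈ P := by
      rcases hP.mem_or_mem (show c * a ∈ P by rw [hc]; exact hxP) with h1 | h1
      · exact h1
      · exact absurd h1 haP
    exact hx0 (by rw [← hc]; exact hPa c hcP)
end

section
/- In a commutative local ring R which is not a field and in which every ideal equals its double annihilator, the annihilator of the nilradical is contained in the nilradical. -/
theorem ann_nilradical_le_nilradical_of_local_dual (R : Type*) [CommRing R] [IsLocalRing R]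
    (hnf : ¬ IsField R)
    (hdual : ∀ I : Ideal R, Submodule.annihilator (Submodule.annihilator I : Ideal R) = I) :
    Submodule.annihilator (nilradical R) ≤ nilradical R := by
  intro a ha
  rw [mem_nilradical]
  by_contra hnil
  set m : Ideal R := IsLocalRing.maximalIdeal R with hm
  have hmne : m ≠ ⊥ := fun h => hnf (IsLocalRing.isField_iff_maximalIdeal_eq.mpr h)
  set S : Ideal R := Submodule.annihilator m with hSdef
  have hannm : Submodule.annihilator S = m := hdual m
  have hSne : S ≠ ⊥ := by
    intro h
    rw [h, Submodule.annihilator_bot] at hannm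
    exact (IsLocalRing.maximalIdeal.isMaximal R).ne_top hannm.symm
  -- every nonzero ideal contains S
  have key : ∀ I : Ideal R, I ≠ ⊥ → S ≤ I := by
    intro I hI
    have h1 : Submodule.annihilator I ≠ ⊤ := by
      intro h
      apply hI
      rw [eq_bot_iff]
      intro x hx
      have h1 : (1 : R) ∈ Submodule.annihilator I := by rw [h]; trivial
      have := Submodule.mem_annihilator.mp h1 x hx
      rw [smul_eq_mul, one_mul] at this
      simpa using this
    have h2 : Submodule.annihilator I ≤ m := IsLocalRing.le_maximalIdeal h1
    calc S ≤ Submodule.annihilator (Submodule.annihilator I) :=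
            Submodule.annihilator_mono h2
      _ = I := hdual I
  obtain ⟨s, hsS, hs0⟩ := Submodule.ne_bot_iff S |>.mp hSne
  have ha2 : Ideal.span {a ^ 2} ≠ ⊥ := by
    intro h
    exact hnil ⟨2, Ideal.span_singleton_eq_bot.mp h⟩
  have hsmem : s ∈ Ideal.span {a ^ 2} := key _ ha2 hsS
  obtain ⟨c, hc⟩ := Ideal.mem_span_singleton'.mp hsmem
  by_cases hcu : IsUnit c
  · -- then a ^ 2 ∈ S, so a ^ 4 = 0
    have hSm : S ≤ m := by
      apply IsLocalRing.le_maximalIdeal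
      intro h
      rw [h] at hannm
      apply hmne
      rw [← hannm, eq_bot_iff]
      intro x hx
      have h1 : x ∈ Submodule.annihilator (⊤ : Ideal R) := by exact hx
      have := Submodule.mem_annihilator.mp h1 1 trivial
      rw [smul_eq_mul, mul_one] at this
      simpa using this
    have hsm : s ∈ m := hSm hsS
    have hss : s * s = 0 := by
      have h2 := Submodule.mem_annihilator.mp hsS s hsm
      rwa [smul_eq_mul] at h2
    have h4 : c * c * a ^ 4 = 0 := by
      have : (c * a ^ 2) * (c * a ^ 2) = 0 := by rw [hc]; exact hss
      calc c * c * a ^ 4 = (c * a ^ 2) * (c * a ^ 2) := by ring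
        _ = 0 := this
    have : a ^ 4 = 0 := by
      have hu : IsUnit (c * c) := hcu.mul hcu
      obtain ⟨u, hu⟩ := hu
      have := congrArg (fun x => (↑u⁻¹ : R) * x) h4
      simpa [← hu, ← mul_assoc] using this
    exact hnil ⟨4, this⟩
  · have hcm : c ∈ m := hcu
    have hsc : s * c = 0 := by
      have h2 := Submodule.mem_annihilator.mp hsS c hcm
      rwa [smul_eq_mul] at h2
    have hca : IsNilpotent (c * a) := by
      refine ⟨2, ?_⟩
      have : (c * a ^ 2) * c = 0 := by rw [hc]; exact hsc
      calc (c * a) ^ 2 = (c * a ^ 2) * c := by ring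
        _ = 0 := this
    have hmem : c * a ∈ nilradical R := mem_nilradical.mpr hca
    have : a * (c * a) = 0 := by
      have h2 := Submodule.mem_annihilator.mp ha (c * a) hmem
      rwa [smul_eq_mul] at h2
    apply hs0
    rw [← hc]
    calc c * a ^ 2 = a * (c * a) := by ring
      _ = 0 := this
end

section
/- In a commutative local ring R which is not a field and in which every ideal equals its double annihilator, the annihilator of any prime ideal is a nil ideal (contained in the nilradical). -/
theorem ann_prime_nil_of_local_dual (R : Type*) [CommRing R] [IsLocalRing R]
    (hnf : ¬ IsField R)
    (hdual : ∀ I : Ideal R, Submodule.annihilator (Submodule.annihilator I : Ideal R) = I)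
    (P : Ideal R) (hP : P.IsPrime) :
    Submodule.annihilator P ≤ nilradical R := by
  classical
  have hmax : (IsLocalRing.maximalIdeal R).IsMaximal := IsLocalRing.maximalIdeal.isMaximal R
  set m := IsLocalRing.maximalIdeal R with hm
  have hmne : m ≠ ⊥ := by
    intro h
    exact hnf ((IsLocalRing.isField_iff_maximalIdeal_eq (R := R)).mpr h)
  -- Step 1: ann P ≤ P
  have hKP : (Submodule.annihilator P : Ideal R) ≤ P := by
    intro x hx
    by_contra hxP
    -- For any power-like element y ∉ P with y ∈ ann P as factor, ann(span y) = P
    have key : ∀ y : R, y ∉ P → (∀ p ∈ P, p * y = 0) →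
        (Submodule.annihilator (Ideal.span {y}) : Ideal R) = P := by
      intro y hyP hyann
      apply le_antisymm
      · intro z hz
        have hzy : z * y = 0 := by
          have := Submodule.mem_annihilator.mp hz y (Ideal.mem_span_singleton_self y)
          simpa [smul_eq_mul] using this
        have : z * y ∈ P := by rw [hzy]; exact P.zero_mem
        exact (hP.mem_or_mem this).resolve_right hyP
      · intro p hp
        rw [Submodule.mem_annihilator]
        intro n hn
        obtain ⟨a, rfl⟩ := Ideal.mem_span_singleton'.mp hn
        have : p * (a * y) = a * (p * y) := by ring
        simp [smul_eq_mul, this, hyann p hp]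
    have hxann : ∀ p ∈ P, p * x = 0 := by
      intro p hp
      have := Submodule.mem_annihilator.mp hx p hp
      simpa [smul_eq_mul, mul_comm] using this
    have hx2P : x * x ∉ P := fun h => hxP ((hP.mem_or_mem h).elim id id)
    have hx2ann : ∀ p ∈ P, p * (x * x) = 0 := by
      intro p hp
      have : p * (x * x) = (p * x) * x := by ring
      rw [this, hxann p hp, zero_mul]
    have h1 : (Submodule.annihilator (Ideal.span {x}) : Ideal R) = P := key x hxP hxann
    have h2 : (Submodule.annihilator (Ideal.span {x * x}) : Ideal R) = P :=
      key (x * x) hx2P hx2ann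
    have hs1 : Ideal.span {x} = (Submodule.annihilator P : Ideal R) := by
      conv_lhs => rw [← hdual (Ideal.span {x}), h1]
    have hs2 : Ideal.span {x * x} = (Submodule.annihilator P : Ideal R) := by
      conv_lhs => rw [← hdual (Ideal.span {x * x}), h2]
    have hxmem : x ∈ Ideal.span ({x * x} : Set R) := by
      rw [hs2, ← hs1]; exact Ideal.mem_span_singleton_self x
    obtain ⟨d, hd⟩ := Ideal.mem_span_singleton.mp hxmem  -- x * x ∣ x
    -- (1 - x*d) * x = 0, so 1 - x*d ∈ P
    have hzero : (1 - x * d) * x = 0 := by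
      have h : (1 - x * d) * x = x - x * x * d := by ring
      rw [h, ← hd, sub_self]
    have h1P : (1 : R) - x * d ∈ P := by
      have : (1 - x * d) * x ∈ P := by rw [hzero]; exact P.zero_mem
      exact (hP.mem_or_mem this).resolve_right hxP
    -- x ∈ m, else x is a unit and P = ⊥, making R a domain; contradiction
    have hxm : x ∈ m := by
      by_contra hxm
      have hxu : IsUnit x := by
        simpa [hm] using (IsLocalRing.notMem_maximalIdeal.mp hxm)
      have hPbot : P = ⊥ := by
        apply (Submodule.eq_bot_iff P).mpr
        intro p hp
        have := hxann p hp
        obtain ⟨u, hu⟩ := hxu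
        have : p * u.val = 0 := by rw [hu]; exact this
        have := congrArg (· * (u⁻¹ : Rˣ).val) this
        simpa [mul_assoc] using this
      -- R is a domain; then ann m = ⊥, so ann ⊥ = m, but 1 ∈ ann ⊥
      obtain ⟨a, ham, hane⟩ := Submodule.exists_mem_ne_zero_of_ne_bot hmne
      have hdom : ∀ z : R, z * a = 0 → z = 0 := by
        intro z hz
        have hmem : z * a ∈ P := by rw [hz]; exact P.zero_mem
        rcases hP.mem_or_mem hmem with h | h
        · rw [hPbot] at h; simpa using h
        · rw [hPbot] at h; exact absurd (by simpa using h) hane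
      have hannm : (Submodule.annihilator m : Ideal R) = ⊥ := by
        apply (Submodule.eq_bot_iff _).mpr
        intro z hz
        have := Submodule.mem_annihilator.mp hz a ham
        exact hdom z (by simpa [smul_eq_mul] using this)
      have := hdual m
      rw [hannm] at this
      have h1m : (1 : R) ∈ m := by
        rw [← this]
        rw [Submodule.mem_annihilator]
        intro n hn
        have : n = 0 := by simpa using hn
        simp [this]
      exact hmax.ne_top (Ideal.eq_top_iff_one m |>.mpr h1m)
    -- now 1 = (1 - x*d) + x*d ∈ m
    have hPm : P ≤ m := IsLocalRing.le_maximalIdeal hP.ne_top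
    have h1m : (1 : R) ∈ m := by
      have := m.add_mem (hPm h1P) (m.mul_mem_right d hxm)
      simpa using this
    exact hmax.ne_top (Ideal.eq_top_iff_one m |>.mpr h1m)
  -- Step 2: ann P ≤ every prime
  rw [nilradical_eq_sInf]
  intro z hz
  rw [Submodule.mem_sInf]
  intro Q hQ
  by_cases hPQ : P ≤ Q
  · exact hPQ (hKP hz)
  · obtain ⟨p, hpP, hpQ⟩ := Set.not_subset.mp hPQ
    have hzp : z * p = 0 := by
      have := Submodule.mem_annihilator.mp hz p hpP
      simpa [smul_eq_mul] using this
    have : z * p ∈ Q := by rw [hzp]; exact Q.zero_mem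
    exact (hQ.mem_or_mem this).resolve_right hpQ
end

section
/- Define the dualradical of an ideal I of a commutative ring R as d(I) = the intersection of all prime ideals not containing I (with d(I) = R if every prime contains I). Then d is antitone, r(a(I)) ⊆ d(I) and r(I) ⊆ d(a(I)) for every ideal I, r(I) ⊆ d(d(I)), d(d(d(I))) = d(I), and r(d(I)) = d(I) = d(r(I)). -/
/-- The dualradical of an ideal: the intersection of all prime ideals not containing it
(equal to `⊤ = R` when every prime contains the ideal, by `sInf ∅ = ⊤`). -/
def dualradical {R : Type*} [CommRing R] (I : Ideal R) : Ideal R :=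
  sInf {P : Ideal R | P.IsPrime ∧ ¬ I ≤ P}

theorem dualradical_props (R : Type*) [CommRing R] :
    (∀ I J : Ideal R, I ≤ J → dualradical J ≤ dualradical I) ∧
    (∀ I : Ideal R, (Submodule.annihilator I : Ideal R).radical ≤ dualradical I) ∧
    (∀ I : Ideal R, I.radical ≤ dualradical (Submodule.annihilator I)) ∧
    (∀ I : Ideal R, I.radical ≤ dualradical (dualradical I)) ∧
    (∀ I : Ideal R, dualradical (dualradical (dualradical I)) = dualradical I) ∧
    (∀ I : Ideal R, (dualradical I).radical = dualradical I ∧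
      dualradical I = dualradical I.radical) := by
  have hanti : ∀ I J : Ideal R, I ≤ J → dualradical J ≤ dualradical I := by
    intro I J h
    apply sInf_le_sInf
    rintro P ⟨hP, hIP⟩
    exact ⟨hP, fun hJ => hIP (h.trans hJ)⟩
  have hann1 : ∀ I : Ideal R, (Submodule.annihilator I : Ideal R).radical ≤ dualradical I := by
    intro I
    refine le_sInf ?_
    rintro P ⟨hP, hIP⟩
    rw [hP.radical_le_iff]
    obtain ⟨x, hxI, hxP⟩ := SetLike.not_le_iff_exists.mp hIP
    intro a ha
    have : a * x = 0 := Submodule.mem_annihilator.mp ha x hxI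
    rcases hP.mem_or_mem (show a * x ∈ P by rw [this]; exact P.zero_mem) with h | h
    · exact h
    · exact absurd h hxP
  have hann2 : ∀ I : Ideal R, I.radical ≤ dualradical (Submodule.annihilator I) := by
    intro I
    refine le_sInf ?_
    rintro P ⟨hP, hIP⟩
    rw [hP.radical_le_iff]
    obtain ⟨a, haI, haP⟩ := SetLike.not_le_iff_exists.mp hIP
    intro x hx
    have : a * x = 0 := Submodule.mem_annihilator.mp haI x hx
    rcases hP.mem_or_mem (show a * x ∈ P by rw [this]; exact P.zero_mem) with h | h
    · exact absurd h haP
    · exact h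
  have hdd : ∀ I : Ideal R, I.radical ≤ dualradical (dualradical I) := by
    intro I
    refine le_sInf ?_
    rintro P ⟨hP, hdP⟩
    rw [hP.radical_le_iff]
    by_contra hIP
    exact hdP (sInf_le ⟨hP, hIP⟩)
  have hrad : ∀ I : Ideal R, (dualradical I).radical = dualradical I := by
    intro I
    refine le_antisymm ?_ Ideal.le_radical
    intro x hx
    obtain ⟨n, hn⟩ := hx
    rw [dualradical, Submodule.mem_sInf]
    rintro P ⟨hP, hIP⟩
    have hxn := Submodule.mem_sInf.mp hn P ⟨hP, hIP⟩
    exact hP.mem_of_pow_mem n hxn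
  have hdr : ∀ I : Ideal R, dualradical I = dualradical I.radical := by
    intro I
    unfold dualradical
    congr 1
    ext P
    simp only [Set.mem_setOf_eq, and_congr_right_iff]
    intro hP
    rw [hP.radical_le_iff]
  refine ⟨hanti, hann1, hann2, hdd, ?_, fun I => ⟨hrad I, hdr I⟩⟩
  intro I
  refine le_antisymm (hanti _ _ (Ideal.le_radical.trans (hdd I))) ?_
  calc dualradical I = (dualradical I).radical := (hrad I).symm
    _ ≤ dualradical (dualradical (dualradical I)) := hdd _
end

section
/- Let R be a commutative ring with dualradical map d (d(I) is the intersection of primes not containing I). If d(d(I)) = r(I) for every ideal I, then every maximal ideal of R is a minimal prime (R is zero-dimensional), and d(I) ≠ r(0) for every proper ideal I. -/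
lemma dualradical_eq_top {R : Type*} [CommRing R] {I : Ideal R}
    (hI : ∀ P : Ideal R, P.IsPrime → I ≤ P) : dualradical I = ⊤ := by
  unfold dualradical
  have : {P : Ideal R | P.IsPrime ∧ ¬ I ≤ P} = ∅ := by
    ext P
    simp only [Set.mem_setOf_eq, Set.mem_empty_iff_false, iff_false, not_and, not_not]
    exact fun hP => hI P hP
  rw [this, sInf_empty]

theorem zeroDim_of_dd_eq_radical (R : Type*) [CommRing R] [Nontrivial R]
    (h : ∀ I : Ideal R, dualradical (dualradical I) = I.radical) :
    (∀ M : Ideal R, M.IsMaximal → M ∈ minimalPrimes R) ∧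
    (∀ I : Ideal R, I ≠ ⊤ → dualradical I ≠ nilradical R) := by
  constructor
  · intro M hM
    have hMp : M.IsPrime := hM.isPrime
    refine ⟨⟨hMp, bot_le⟩, ?_⟩
    rintro Q ⟨hQp, -⟩ hQM
    by_contra hne
    have hQneM : Q ≠ M := fun hEq => hne (hEq ▸ le_refl Q)
    -- d(M) ≤ Q
    have h1 : dualradical M ≤ Q := by
      apply sInf_le
      exact ⟨hQp, fun hMQ => hQneM (le_antisymm hQM hMQ)⟩
    -- every prime contains d(M)
    have h2 : ∀ P : Ideal R, P.IsPrime → dualradical M ≤ P := by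
      intro P hP
      by_cases hMP : M ≤ P
      · have hPM : P = M := (hM.eq_of_le hP.ne_top hMP).symm
        exact hPM ▸ (h1.trans hQM)
      · exact sInf_le ⟨hP, hMP⟩
    have h3 : dualradical (dualradical M) = ⊤ := dualradical_eq_top h2
    rw [h M, hMp.radical] at h3
    exact hMp.ne_top h3
  · intro I hI hd
    have := h I
    rw [hd, dualradical_eq_top (fun P hP => nilradical_le_prime P)] at this
    exact hI (Ideal.radical_eq_top.mp this.symm)
end
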